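/- Fix a real number λ ≠ 0 and integers n, k ≥ 0. If n ≥ k, then (1/k!) Σ_{l=0}^{k} C(k,l) (−1)^{k−l} B_{n,λ}(l) = S^{(2)}_{J,λ}(n,k), while if 0 ≤ n < k, then (1/k!) Σ_{l=0}^{k} C(k,l) (−1)^{k−l} B_{n,λ}(l) = 0. Here C(k,l) is the ordinary binomial coefficient. -/

import Mathlib

open Finset

/-- The degenerate falling factorial `(x)_{n,λ} = x(x−λ)⋯(x−(n−1)λ)`;
for `lam = 1` it is the ordinary falling factorial `(x)_n`. -/
noncomputable def dff (lam : ℝ) (n : ℕ) (x : ℝ) : ℝ :=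
  ∏ i ∈ Finset.range n, (x - i * lam)

/-- The degenerate exponential `e_λ^x(t) = Σ_{n≥0} (x)_{n,λ} t^n/n!`. -/
noncomputable def degExp (lam x : ℝ) : PowerSeries ℝ :=
  PowerSeries.mk fun n => dff lam n x / n.factorial

/-- The degenerate logarithm `log_λ(1+t) = Σ_{n≥1} λ^{n−1}(1)_{n,1/λ} t^n/n!`. -/
noncomputable def degLog (lam : ℝ) : PowerSeries ℝ :=
  PowerSeries.mk fun n =>
    if n = 0 then 0 else lam ^ (n - 1) * dff (1 / lam) n 1 / n.factorial

/-- Composition `f(g(t))` of formal power series (valid definition of composition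
when `g` has zero constant term, as in all uses below). -/
noncomputable def pscomp (f g : PowerSeries ℝ) : PowerSeries ℝ :=
  PowerSeries.mk fun n =>
    ∑ k ∈ Finset.range (n + 1), (PowerSeries.coeff (R := ℝ) k f) * (PowerSeries.coeff (R := ℝ) n (g ^ k))

/-!
The degenerate exponentials form an exponential family, `e_λ^{x+y} = e_λ^x e_λ^y`: coefficientwise
this is the Chu–Vandermonde identity for degenerate falling factorials (for `λ ≠ 0` a rescaling
of the one for `descPochhammer`, for `λ = 0` the binomial theorem). Hence `e_λ^l = (e_λ)^l`.
Composition with `g = e_λ(t) − 1`, which has no constant term, is Mathlib's substitution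
algebra homomorphism, so expanding `(e_λ − 1)^k` by the binomial theorem gives
`(e_λ(g) − 1)^k = Σ_l C(k,l) (−1)^{k−l} e_λ^l(g)`; comparing coefficients of `t^n` yields both cases.
-/

open PowerSeries

theorem dff_zero_left (n : ℕ) (x : ℝ) : dff 0 n x = x ^ n := by
  simp [dff]

theorem dff_eq_pow_mul_smeval {lam : ℝ} (hlam : lam ≠ 0) (n : ℕ) (x : ℝ) :
    dff lam n x = lam ^ n * (descPochhammer ℤ n).smeval (x / lam) := by
  induction n with
  | zero => simp [dff]
  | succ n ih =>
    rw [dff, prod_range_succ, ← dff, ih, descPochhammer_succ_right, Polynomial.smeval_mul,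
      Polynomial.smeval_sub, Polynomial.smeval_X, Polynomial.smeval_natCast]
    field_simp
    ring

theorem dff_add (lam : ℝ) (n : ℕ) (x y : ℝ) :
    dff lam n (x + y) =
      ∑ ij ∈ antidiagonal n, (n.choose ij.1 : ℝ) * (dff lam ij.1 x * dff lam ij.2 y) := by
  rcases eq_or_ne lam 0 with rfl | hlam
  · simp only [dff_zero_left, (Commute.all x y).add_pow', nsmul_eq_mul]
  · rw [dff_eq_pow_mul_smeval hlam, add_div,
      Ring.descPochhammer_smeval_add n (Commute.all (x / lam) (y / lam)), mul_sum]
    refine sum_congr rfl fun ij hij => ?_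
    rw [dff_eq_pow_mul_smeval hlam, dff_eq_pow_mul_smeval hlam, ← mem_antidiagonal.mp hij,
      pow_add]
    ring

theorem degExp_add (lam x y : ℝ) : degExp lam (x + y) = degExp lam x * degExp lam y := by
  ext n
  simp only [degExp, coeff_mul, coeff_mk, dff_add, sum_div]
  refine sum_congr rfl fun ij hij => ?_
  obtain ⟨i, j⟩ := ij
  obtain rfl : i + j = n := mem_antidiagonal.mp hij
  have hfact := Nat.add_choose_mul_factorial_mul_factorial j i
  rw [add_comm j i] at hfact
  have hchoose : ((i + j).choose i : ℝ) ≠ 0 := Nat.cast_ne_zero.mpr (Nat.choose_pos (by omega)).ne'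
  rw [← hfact]
  push_cast
  field_simp

theorem degExp_zero_right (lam : ℝ) : degExp lam 0 = 1 := by
  ext n
  cases n <;> simp [degExp, dff, coeff_one, prod_range_succ']

theorem degExp_natCast (lam : ℝ) (l : ℕ) : degExp lam l = degExp lam 1 ^ l := by
  induction l with
  | zero => simpa using degExp_zero_right lam
  | succ l ih => rw [Nat.cast_succ, degExp_add, ih, pow_succ]

theorem constantCoeff_degExp (lam x : ℝ) : constantCoeff (degExp lam x) = 1 := by
  simp [degExp, dff]

theorem coeff_pow_eq_zero_of_lt {g : ℝ⟦X⟧} (hg : constantCoeff g = 0) {n k : ℕ} (h : n < k) :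
    coeff n (g ^ k) = 0 :=
  X_pow_dvd_iff.mp (pow_dvd_pow_of_dvd (X_dvd_iff.mpr hg) k) n h

theorem pscomp_eq_subst {g : ℝ⟦X⟧} (hg : constantCoeff g = 0) (f : ℝ⟦X⟧) :
    pscomp f g = f.subst g := by
  ext n
  rw [coeff_subst' (HasSubst.of_constantCoeff_zero' hg), pscomp, coeff_mk,
    finsum_eq_sum_of_support_subset _ (s := range (n + 1))]
  · simp only [smul_eq_mul]
  · intro k hk
    contrapose! hk
    simp [coeff_pow_eq_zero_of_lt hg (by simpa using hk)]

theorem pscomp_sub_one_pow {g : ℝ⟦X⟧} (hg : constantCoeff g = 0) (f : ℝ⟦X⟧) (k : ℕ) :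
    (pscomp f g - 1) ^ k =
      ∑ l ∈ range (k + 1), ((k.choose l : ℝ) * (-1) ^ (k - l)) • pscomp (f ^ l) g := by
  let φ := substAlgHom (R := ℝ) (HasSubst.of_constantCoeff_zero' hg)
  have hφ (f : ℝ⟦X⟧) : pscomp f g = φ f := by rw [pscomp_eq_subst hg, coe_substAlgHom]
  simp only [hφ]
  rw [← map_one φ, ← map_sub, ← map_pow]
  simp only [← map_smul, ← map_sum]
  congr 1
  rw [sub_eq_add_neg, add_pow]
  refine sum_congr rfl fun l _ => ?_
  simp only [Algebra.smul_def, map_mul, map_pow, map_neg, map_one, map_natCast]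
  ring

theorem jindalrae_stirling2_alternating_sum_general (lam : ℝ)
    (B : ℕ → ℝ → ℝ) (SJ2 : ℕ → ℕ → ℝ)
    (hB : ∀ x : ℝ, pscomp (degExp lam x) (degExp lam 1 - 1) = PowerSeries.mk (fun n => B n x / n.factorial))
    (hSJ2 : ∀ k : ℕ, (PowerSeries.C (R := ℝ) ((k.factorial : ℝ))⁻¹) * (pscomp (degExp lam 1) (degExp lam 1 - 1) - 1) ^ k = PowerSeries.mk (fun n => if k ≤ n then SJ2 n k / n.factorial else 0))
    : ∀ n k : ℕ, (k ≤ n → ((k.factorial : ℝ))⁻¹ * ∑ l ∈ Finset.range (k + 1), (k.choose l : ℝ) * (-1 : ℝ) ^ (k - l) * B n (l : ℝ) = SJ2 n k) ∧ (n < k → ((k.factorial : ℝ))⁻¹ * ∑ l ∈ Finset.range (k + 1), (k.choose l : ℝ) * (-1 : ℝ) ^ (k - l) * B n (l : ℝ) = 0) := by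
  intro n k
  have hg : constantCoeff (degExp lam 1 - 1) = 0 := by simp [constantCoeff_degExp]
  have hcoeff := congrArg (coeff n) (hSJ2 k)
  rw [pscomp_sub_one_pow hg, coeff_C_mul, map_sum, coeff_mk] at hcoeff
  simp only [← degExp_natCast, hB, coeff_smul, coeff_mk, smul_eq_mul, mul_div_assoc',
    ← sum_div] at hcoeff
  have hn : (n.factorial : ℝ) ≠ 0 := by positivity
  refine ⟨fun hkn => ?_, fun hnk => ?_⟩
  · rwa [if_pos hkn, div_left_inj' hn] at hcoeff
  · rwa [if_neg (by omega), div_eq_zero_iff, or_iff_left hn] at hcoeff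

theorem jindalrae_stirling2_alternating_sum (lam : ℝ) (hlam : lam ≠ 0)
    (B : ℕ → ℝ → ℝ) (SJ2 : ℕ → ℕ → ℝ)
    (hB : ∀ x : ℝ, pscomp (degExp lam x) (degExp lam 1 - 1) = PowerSeries.mk (fun n => B n x / n.factorial))
    (hSJ2 : ∀ k : ℕ, (PowerSeries.C (R := ℝ) ((k.factorial : ℝ))⁻¹) * (pscomp (degExp lam 1) (degExp lam 1 - 1) - 1) ^ k = PowerSeries.mk (fun n => if k ≤ n then SJ2 n k / n.factorial else 0))
    : ∀ n k : ℕ, (k ≤ n → ((k.factorial : ℝ))⁻¹ * ∑ l ∈ Finset.range (k + 1), (k.choose l : ℝ) * (-1 : ℝ) ^ (k - l) * B n (l : ℝ) = SJ2 n k) ∧ (n < k → ((k.factorial : ℝ))⁻¹ * ∑ l ∈ Finset.range (k + 1), (k.choose l : ℝ) * (-1 : ℝ) ^ (k - l) * B n (l : ℝ) = 0) :=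
  jindalrae_stirling2_alternating_sum_general lam B SJ2 hB hSJ2
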